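/- The points (-1, 8 + 2√17), (4 + √41, 40 + 6√41), (-10 - √89, 310 + 32√89) lie on the curve K3 defined by 8x^8 - 32x^6 y + 40x^4 y^2 + 64x^5 - 16x^2 y^3 - 128x^3 y + y^4 + 48x y^2 + 96x^2 - 32y - 24 = 0, where the coordinates are real numbers. -/

import Mathlib

/-! Each point is one of a pair of Galois-conjugate points of K3 on a rational line
(`x = -1`, `y = 6x + 16`, `y = -32x - 10`). Restricted to that line, the defining polynomial
is divisible by the minimal polynomial of the free coordinate, so the conjugate pair lies on
the curve. -/

def K3 (x y : ℝ) : Prop :=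
  8*x^8 - 32*x^6*y + 40*x^4*y^2 + 64*x^5 - 16*x^2*y^3 - 128*x^3*y
    + y^4 + 48*x*y^2 + 96*x^2 - 32*y - 24 = 0

theorem K3_neg_one_of_sq_sub {y : ℝ} (hy : y^2 - 16*y - 4 = 0) : K3 (-1) y := by
  unfold K3
  linear_combination (y^2 - 4) * hy

theorem K3_of_sq_sub_of_eq_six_mul_add {x y : ℝ} (hx : x^2 - 8*x - 25 = 0)
    (hy : y = 6*x + 16) : K3 x y := by
  subst hy
  unfold K3
  linear_combination
    (8*x^6 - 128*x^5 + 104*x^4 + 1920*x^3 + 1080*x^2 - 3584*x - 2600) * hx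

theorem K3_of_sq_add_of_eq_neg_mul_sub {x y : ℝ} (hx : x^2 + 20*x + 11 = 0)
    (hy : y = -32*x - 10) : K3 x y := by
  subst hy
  unfold K3
  linear_combination
    (8*x^6 + 864*x^5 + 23912*x^4 + 62208*x^3 + 41000*x^2 + 10464*x + 936) * hx

theorem stmt_12 :
    K3 (-1) (8 + 2*Real.sqrt 17) ∧
    K3 (4 + Real.sqrt 41) (40 + 6*Real.sqrt 41) ∧
    K3 (-10 - Real.sqrt 89) (310 + 32*Real.sqrt 89) := by
  have h17 : Real.sqrt 17 ^ 2 = 17 := Real.sq_sqrt (by norm_num)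
  have h41 : Real.sqrt 41 ^ 2 = 41 := Real.sq_sqrt (by norm_num)
  have h89 : Real.sqrt 89 ^ 2 = 89 := Real.sq_sqrt (by norm_num)
  exact ⟨K3_neg_one_of_sq_sub (by linear_combination 4 * h17),
    K3_of_sq_sub_of_eq_six_mul_add (by linear_combination h41) (by ring),
    K3_of_sq_add_of_eq_neg_mul_sub (by linear_combination h89) (by ring)⟩
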